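/- arXiv:2505.03271 — 3 statements merged into one kernel-verified Lean document; each statement's English description precedes it below -/
import Mathlib

section
/- The discrete H¹ norm ‖·‖_{δx} is an algebra norm uniformly in the discretization: there exists C > 0 independent of K ∈ ℕ and δx > 0 such that for all v, w ∈ V one has ‖v • w‖_{δx} ≤ C‖v‖_{δx}‖w‖_{δx}, where • is entrywise multiplication. -/
/-!
A finitely supported `v : ℤ → ℂ` satisfies the discrete Morrey inequality
`‖v j‖² ≤ ‖v‖²_{δx}` for every `j`: telescope `‖v k‖²` from the left of the support and bound
each increment `|‖v (k+1)‖² - ‖v k‖²| ≤ ‖v (k+1) - v k‖ (‖v (k+1)‖ + ‖v k‖)` by AM-GM with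
weight `δx`, which balances the two parts of the norm. The discrete Leibniz rule
`v (k+1) w (k+1) - v k w k = v (k+1) (w (k+1) - w k) + (v (k+1) - v k) w k` gives
`‖v w‖²_{δx} ≤ 2 ‖v‖²_∞ ‖w‖²_{δx} + 2 ‖w‖²_∞ ‖v‖²_{δx}`, and combining the two yields the
algebra property with `C = 2`.
-/

/-- The squared discrete H¹-type norm `‖ψ‖²_{δx}`. -/
noncomputable def discNormSq (δx : ℝ) (v : ℤ → ℂ) : ℝ :=
  2 * δx * ∑' j : ℤ, ‖v (j + 1) - v j‖ ^ 2 / δx ^ 2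
    + δx * ∑' j : ℤ, ‖v j‖ ^ 2

open Function

theorem Int.sum_Ico_sub {M : Type*} [AddCommGroup M] (F : ℤ → M) {a b : ℤ} (hab : a ≤ b) :
    ∑ k ∈ Finset.Ico a b, (F (k + 1) - F k) = F b - F a := by
  induction b, hab using Int.leInduction with
  | base => simp
  | succ b hab ih =>
    rw [Finset.Ico_add_one_right_eq_Icc, ← Finset.sum_Ico_add_eq_sum_Icc hab, ih]
    abel

theorem abs_le_tsum_abs_sub_of_hasFiniteSupport {F : ℤ → ℝ} (hF : F.HasFiniteSupport) (j : ℤ) :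
    |F j| ≤ ∑' k, |F (k + 1) - F k| := by
  obtain ⟨a, haj, hFa⟩ : ∃ a ≤ j, F a = 0 := by
    obtain ⟨b, hb⟩ := hF.bddBelow
    refine ⟨min j (b - 1), min_le_left _ _, notMem_support.mp fun h => ?_⟩
    have := hb h
    omega
  have hsum : Summable fun k => |F (k + 1) - F k| :=
    summable_of_hasFiniteSupport (by fun_prop (disch := simp [add_left_injective]))
  calc |F j| = |∑ k ∈ Finset.Ico a j, (F (k + 1) - F k)| := by
        rw [Int.sum_Ico_sub F haj, hFa, sub_zero]
    _ ≤ ∑ k ∈ Finset.Ico a j, |F (k + 1) - F k| := Finset.abs_sum_le_sum_abs _ _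
    _ ≤ ∑' k, |F (k + 1) - F k| := hsum.sum_le_tsum _ fun k _ => abs_nonneg _

theorem abs_sq_norm_sub_sq_norm_le {E : Type*} [SeminormedAddCommGroup E] (x y : E) {δ : ℝ}
    (hδ : 0 < δ) :
    |‖x‖ ^ 2 - ‖y‖ ^ 2| ≤ ‖x - y‖ ^ 2 / δ + δ / 2 * (‖x‖ ^ 2 + ‖y‖ ^ 2) := by
  have hdiff : |‖x‖ ^ 2 - ‖y‖ ^ 2| ≤ ‖x - y‖ * (‖x‖ + ‖y‖) := by
    rw [sq_sub_sq, abs_mul, abs_of_nonneg (by positivity : 0 ≤ ‖x‖ + ‖y‖), mul_comm]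
    exact mul_le_mul_of_nonneg_right (abs_norm_sub_norm_le x y) (by positivity)
  have hamgm : ‖x - y‖ * (‖x‖ + ‖y‖) ≤ ‖x - y‖ ^ 2 / δ + δ / 4 * (‖x‖ + ‖y‖) ^ 2 := by
    rw [div_add' _ _ _ hδ.ne', le_div_iff₀ hδ]
    nlinarith [sq_nonneg (‖x - y‖ - δ / 2 * (‖x‖ + ‖y‖))]
  nlinarith [add_sq_le (a := ‖x‖) (b := ‖y‖)]

theorem norm_mul_sub_mul_sq_le {R : Type*} [NonUnitalSeminormedRing R] (a b c d : R) :
    ‖a * b - c * d‖ ^ 2 ≤ 2 * ‖a‖ ^ 2 * ‖b - d‖ ^ 2 + 2 * ‖d‖ ^ 2 * ‖a - c‖ ^ 2 := by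
  have h : ‖a * b - c * d‖ ≤ ‖a‖ * ‖b - d‖ + ‖a - c‖ * ‖d‖ :=
    calc ‖a * b - c * d‖ = ‖a * (b - d) + (a - c) * d‖ := by congr 1; noncomm_ring
      _ ≤ ‖a‖ * ‖b - d‖ + ‖a - c‖ * ‖d‖ :=
        (norm_add_le _ _).trans (add_le_add (norm_mul_le _ _) (norm_mul_le _ _))
  calc ‖a * b - c * d‖ ^ 2 ≤ (‖a‖ * ‖b - d‖ + ‖a - c‖ * ‖d‖) ^ 2 := by gcongr
    _ ≤ _ := by linarith [add_sq_le (a := ‖a‖ * ‖b - d‖) (b := ‖a - c‖ * ‖d‖)]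

theorem discNormSq_eq (δx : ℝ) (v : ℤ → ℂ) :
    discNormSq δx v = 2 / δx * ∑' j, ‖v (j + 1) - v j‖ ^ 2 + δx * ∑' j, ‖v j‖ ^ 2 := by
  rw [discNormSq, tsum_div_const]
  rcases eq_or_ne δx 0 with rfl | hδ
  · simp
  · field_simp

theorem discNormSq_nonneg {δx : ℝ} (hδ : 0 ≤ δx) (v : ℤ → ℂ) : 0 ≤ discNormSq δx v := by
  unfold discNormSq
  positivity

section HasFiniteSupport

variable {v w : ℤ → ℂ} {δx : ℝ}

theorem sq_norm_le_discNormSq (hv : v.HasFiniteSupport) (hδ : 0 < δx) (j : ℤ) :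
    ‖v j‖ ^ 2 ≤ discNormSq δx v := by
  have hD : Summable fun k => ‖v (k + 1) - v k‖ ^ 2 / δx :=
    summable_of_hasFiniteSupport (by fun_prop (disch := simp [add_left_injective]))
  have hS : Summable fun k => ‖v k‖ ^ 2 :=
    summable_of_hasFiniteSupport (by fun_prop (disch := simp))
  have hS₁ : Summable fun k => ‖v (k + 1)‖ ^ 2 :=
    summable_of_hasFiniteSupport (by fun_prop (disch := simp [add_left_injective]))
  have hshift : ∑' k, ‖v (k + 1)‖ ^ 2 = ∑' k, ‖v k‖ ^ 2 :=
    (Equiv.addRight 1).tsum_eq fun k => ‖v k‖ ^ 2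
  have hD₀ : 0 ≤ ∑' k, ‖v (k + 1) - v k‖ ^ 2 := by positivity
  rw [discNormSq_eq]
  calc ‖v j‖ ^ 2 = |‖v j‖ ^ 2| := (abs_of_nonneg (sq_nonneg _)).symm
    _ ≤ ∑' k, |‖v (k + 1)‖ ^ 2 - ‖v k‖ ^ 2| :=
      abs_le_tsum_abs_sub_of_hasFiniteSupport (F := fun k => ‖v k‖ ^ 2)
        (by fun_prop (disch := simp)) j
    _ ≤ ∑' k, (‖v (k + 1) - v k‖ ^ 2 / δx + δx / 2 * (‖v (k + 1)‖ ^ 2 + ‖v k‖ ^ 2)) :=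
      Summable.tsum_le_tsum (fun k => abs_sq_norm_sub_sq_norm_le _ _ hδ)
        (summable_of_hasFiniteSupport (by fun_prop (disch := simp [add_left_injective])))
        (hD.add ((hS₁.add hS).mul_left _))
    _ = 1 / δx * ∑' k, ‖v (k + 1) - v k‖ ^ 2 + δx * ∑' k, ‖v k‖ ^ 2 := by
      rw [hD.tsum_add ((hS₁.add hS).mul_left _), tsum_div_const, tsum_mul_left, hS₁.tsum_add hS,
        hshift]
      ring
    _ ≤ 2 / δx * ∑' k, ‖v (k + 1) - v k‖ ^ 2 + δx * ∑' k, ‖v k‖ ^ 2 := by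
      gcongr
      norm_num

theorem discNormSq_mul_le (hv : v.HasFiniteSupport) (hw : w.HasFiniteSupport) (hδ : 0 ≤ δx)
    {Mv Mw : ℝ} (hMv : ∀ j, ‖v j‖ ^ 2 ≤ Mv) (hMw : ∀ j, ‖w j‖ ^ 2 ≤ Mw) :
    discNormSq δx (fun j => v j * w j) ≤ 2 * Mv * discNormSq δx w + 2 * Mw * discNormSq δx v := by
  have hMv₀ : 0 ≤ Mv := (sq_nonneg _).trans (hMv 0)
  have hMw₀ : 0 ≤ Mw := (sq_nonneg _).trans (hMw 0)
  have hDv : Summable fun k => ‖v (k + 1) - v k‖ ^ 2 :=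
    summable_of_hasFiniteSupport (by fun_prop (disch := simp [add_left_injective]))
  have hDw : Summable fun k => ‖w (k + 1) - w k‖ ^ 2 :=
    summable_of_hasFiniteSupport (by fun_prop (disch := simp [add_left_injective]))
  have hSw : Summable fun k => ‖w k‖ ^ 2 :=
    summable_of_hasFiniteSupport (by fun_prop (disch := simp))
  have hD : ∑' k, ‖v (k + 1) * w (k + 1) - v k * w k‖ ^ 2 ≤
      2 * Mv * ∑' k, ‖w (k + 1) - w k‖ ^ 2 + 2 * Mw * ∑' k, ‖v (k + 1) - v k‖ ^ 2 := by
    rw [← tsum_mul_left, ← tsum_mul_left, ← (hDw.mul_left _).tsum_add (hDv.mul_left _)]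
    refine Summable.tsum_le_tsum (fun k => ?_)
      (summable_of_hasFiniteSupport (by fun_prop (disch := simp [add_left_injective])))
      ((hDw.mul_left _).add (hDv.mul_left _))
    refine (norm_mul_sub_mul_sq_le _ _ _ _).trans ?_
    gcongr
    exacts [hMv _, hMw _]
  have hS : ∑' k, ‖v k * w k‖ ^ 2 ≤ Mv * ∑' k, ‖w k‖ ^ 2 := by
    rw [← tsum_mul_left]
    refine Summable.tsum_le_tsum (fun k => ?_)
      (summable_of_hasFiniteSupport (by fun_prop (disch := simp))) (hSw.mul_left _)
    rw [norm_mul, mul_pow]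
    gcongr
    exact hMv k
  have hSv₀ : 0 ≤ ∑' k, ‖v k‖ ^ 2 := by positivity
  have hSw₀ : 0 ≤ ∑' k, ‖w k‖ ^ 2 := by positivity
  rw [discNormSq_eq, discNormSq_eq, discNormSq_eq]
  have h1 := mul_le_mul_of_nonneg_left hD (by positivity : 0 ≤ 2 / δx)
  have h2 := mul_le_mul_of_nonneg_left hS hδ
  nlinarith [mul_nonneg (mul_nonneg hMv₀ hδ) hSw₀, mul_nonneg (mul_nonneg hMw₀ hδ) hSv₀]

end HasFiniteSupport

/-- the discrete H¹ norm is an algebra norm uniformly in the discretization: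
there is `C > 0` independent of `K` and `δx` with `‖v•w‖_{δx} ≤ C ‖v‖_{δx} ‖w‖_{δx}`
for all compactly supported `v, w : ℤ → ℂ`. -/
theorem stmt_8 :
    ∃ C : ℝ, 0 < C ∧
      ∀ (K : ℕ) (δx : ℝ), 0 < δx →
      ∀ v w : ℤ → ℂ, (∀ j : ℤ, (K : ℤ) < |j| → v j = 0) → (∀ j : ℤ, (K : ℤ) < |j| → w j = 0) →
        Real.sqrt (discNormSq δx (fun j => v j * w j)) ≤
          C * Real.sqrt (discNormSq δx v) * Real.sqrt (discNormSq δx w) := by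
  refine ⟨2, two_pos, fun K δx hδ v w hv hw => ?_⟩
  have hfin : ∀ u : ℤ → ℂ, (∀ j : ℤ, (K : ℤ) < |j| → u j = 0) → u.HasFiniteSupport :=
    fun u hu => (Set.finite_Icc (-K : ℤ) K).subset fun j hj =>
      Set.mem_Icc.mpr (abs_le.mp (not_lt.mp fun h => hj (hu j h)))
  have hNv := discNormSq_nonneg hδ.le v
  have hNw := discNormSq_nonneg hδ.le w
  have hprod : discNormSq δx (fun j => v j * w j) ≤ 2 ^ 2 * discNormSq δx v * discNormSq δx w := by
    have := discNormSq_mul_le (hfin v hv) (hfin w hw) hδ.le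
      (sq_norm_le_discNormSq (hfin v hv) hδ) (sq_norm_le_discNormSq (hfin w hw) hδ)
    linarith
  calc √(discNormSq δx (fun j => v j * w j)) ≤ √(2 ^ 2 * discNormSq δx v * discNormSq δx w) :=
        Real.sqrt_le_sqrt hprod
    _ = 2 * √(discNormSq δx v) * √(discNormSq δx w) := by
      rw [Real.sqrt_mul (by positivity), Real.sqrt_mul (by positivity), Real.sqrt_sq two_pos.le]
end

section
/- Let X and Y be polynomial vector fields on ℝ^n of degrees s₁ and s₂ respectively, with multilinear norms ‖X‖ and ‖Y‖ defined as the supremum of ‖X̃(ψ₁,…,ψ_{s})‖ over unit vectors (X̃ being the polarized symmetric multilinear form). Then the Lie bracket [X,Y] is a polynomial vector field of degree at most s₁+s₂-1 and satisfies ‖[X,Y]‖ ≤ (s₁+s₂)‖X‖‖Y‖. -/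
/-!
Write `X(u) = f(u,…,u)` and `Y(u) = g(u,…,u)` with `f`, `g` symmetric. By symmetry
`DX(u)v = s₁ f(v,u,…,u)`, so `[X,Y](u)` is the diagonal of the multilinear form
`s₁ f(g(ψ₁,…,ψ_{s₂}), ψ_{s₂+1},…) - s₂ g(f(ψ₁,…,ψ_{s₁}), ψ_{s₁+1},…)` in `s₁ + s₂ - 1`
variables. Its norm is at most `(s₁ + s₂)‖f‖‖g‖`, and averaging over permutations makes it
symmetric without changing its diagonal or increasing its norm.
-/

open Function

namespace ContinuousMultilinearMap

section Symmetrize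

variable {𝕜 ι E F : Type*} [RCLike 𝕜] [Fintype ι] [DecidableEq ι]
  [NormedAddCommGroup E] [NormedSpace 𝕜 E] [NormedAddCommGroup F] [NormedSpace 𝕜 F]

noncomputable def symmetrize (f : ContinuousMultilinearMap 𝕜 (fun _ : ι => E) F) :
    ContinuousMultilinearMap 𝕜 (fun _ : ι => E) F :=
  (Fintype.card (Equiv.Perm ι) : 𝕜)⁻¹ • ∑ σ : Equiv.Perm ι, f.domDomCongr σ

theorem symmetrize_apply (f : ContinuousMultilinearMap 𝕜 (fun _ : ι => E) F) (m : ι → E) :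
    f.symmetrize m =
      (Fintype.card (Equiv.Perm ι) : 𝕜)⁻¹ • ∑ σ : Equiv.Perm ι, f (fun i => m (σ i)) := by
  simp [symmetrize]

theorem symmetrize_apply_perm (f : ContinuousMultilinearMap 𝕜 (fun _ : ι => E) F)
    (τ : Equiv.Perm ι) (m : ι → E) : f.symmetrize (fun i => m (τ i)) = f.symmetrize m := by
  simp only [symmetrize_apply]
  congr 1
  exact Fintype.sum_equiv (Equiv.mulLeft τ) _ _ fun σ => rfl

theorem symmetrize_apply_const (f : ContinuousMultilinearMap 𝕜 (fun _ : ι => E) F) (u : E) :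
    f.symmetrize (fun _ => u) = f fun _ => u := by
  have hcard : (Fintype.card (Equiv.Perm ι) : 𝕜) ≠ 0 := Nat.cast_ne_zero.2 Fintype.card_ne_zero
  rw [symmetrize_apply, Finset.sum_const, Finset.card_univ, ← Nat.cast_smul_eq_nsmul 𝕜,
    inv_smul_smul₀ hcard]

theorem norm_symmetrize_le (f : ContinuousMultilinearMap 𝕜 (fun _ : ι => E) F) :
    ‖f.symmetrize‖ ≤ ‖f‖ := by
  have hcard : (0 : ℝ) < Fintype.card (Equiv.Perm ι) := Nat.cast_pos.2 Fintype.card_pos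
  calc ‖f.symmetrize‖
      ≤ (Fintype.card (Equiv.Perm ι) : ℝ)⁻¹ * ∑ σ : Equiv.Perm ι, ‖f.domDomCongr σ‖ := by
        rw [symmetrize, norm_smul, norm_inv, RCLike.norm_natCast]
        gcongr
        exact norm_sum_le _ _
    _ = ‖f‖ := by
        simp only [norm_domDomCongr, Finset.sum_const, Finset.card_univ, nsmul_eq_mul]
        field_simp

end Symmetrize

variable {𝕜 ι E F : Type*} [NontriviallyNormedField 𝕜]
  [NormedAddCommGroup E] [NormedSpace 𝕜 E] [NormedAddCommGroup F] [NormedSpace 𝕜 F]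

theorem fderiv_apply_const_apply [Fintype ι] [DecidableEq ι]
    (f : ContinuousMultilinearMap 𝕜 (fun _ : ι => E) F) (u v : E) :
    fderiv 𝕜 (fun x => f fun _ => x) u v = ∑ i, f (update (fun _ => u) i v) := by
  rw [(HasFDerivAt.multilinear_comp (g := fun _ x => x) f fun _ => hasFDerivAt_id u).fderiv]
  simp

theorem apply_update_const_eq_of_symmetric [DecidableEq ι]
    (f : ContinuousMultilinearMap 𝕜 (fun _ : ι => E) F)
    (hf : ∀ (σ : Equiv.Perm ι) (m : ι → E), f (fun i => m (σ i)) = f m) (u v : E) (i j : ι) :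
    f (update (fun _ => u) i v) = f (update (fun _ => u) j v) := by
  rw [← hf (Equiv.swap i j)]
  congr 1
  ext k
  simp only [update_apply, Equiv.swap_apply_eq_iff, Equiv.swap_apply_left]

theorem fderiv_apply_const_apply_of_symmetric {k : ℕ} (f : E [×k + 1]→L[𝕜] F)
    (hf : ∀ (σ : Equiv.Perm (Fin (k + 1))) (m : Fin (k + 1) → E), f (fun i => m (σ i)) = f m)
    (u v : E) :
    fderiv 𝕜 (fun x => f fun _ => x) u v = (k + 1) • f (Fin.cons v fun _ => u) := by
  have hcons : (Fin.cons v fun _ => u : Fin (k + 1) → E) = update (fun _ => u) 0 v := by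
    ext i
    cases i using Fin.cases <;> simp
  rw [fderiv_apply_const_apply, hcons,
    Finset.sum_congr rfl fun i _ => f.apply_update_const_eq_of_symmetric hf u v i 0]
  simp

noncomputable def compFirst [Fintype ι] {k : ℕ} (f : E [×k + 1]→L[𝕜] F)
    (g : ContinuousMultilinearMap 𝕜 (fun _ : ι => E) E) :
    ContinuousMultilinearMap 𝕜 (fun _ : ι ⊕ Fin k => E) F :=
  (f.curryLeft.compContinuousMultilinearMap g).uncurrySum

theorem compFirst_apply [Fintype ι] {k : ℕ} (f : E [×k + 1]→L[𝕜] F)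
    (g : ContinuousMultilinearMap 𝕜 (fun _ : ι => E) E) (m : ι ⊕ Fin k → E) :
    f.compFirst g m = f (Fin.cons (g (m ∘ Sum.inl)) (m ∘ Sum.inr)) :=
  rfl

theorem norm_compFirst_le [Fintype ι] {k : ℕ} (f : E [×k + 1]→L[𝕜] F)
    (g : ContinuousMultilinearMap 𝕜 (fun _ : ι => E) E) : ‖f.compFirst g‖ ≤ ‖f‖ * ‖g‖ :=
  calc ‖f.compFirst g‖ = ‖f.curryLeft.compContinuousMultilinearMap g‖ :=
        (currySumEquiv 𝕜 ι (Fin k) E F).symm.norm_map _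
    _ ≤ ‖f.curryLeft‖ * ‖g‖ := ContinuousLinearMap.norm_compContinuousMultilinearMap_le _ _
    _ = ‖f‖ * ‖g‖ := by rw [curryLeft_norm]

section LieBracket

variable {k l : ℕ}

noncomputable def lieBracketForm (f : E [×k + 1]→L[𝕜] E) (g : E [×l + 1]→L[𝕜] E) :
    E [×k + l + 1]→L[𝕜] E :=
  (k + 1) • (f.compFirst g).domDomCongr (finSumFinEquiv.trans (finCongr (by omega))) -
    (l + 1) • (g.compFirst f).domDomCongr (finSumFinEquiv.trans (finCongr (by omega)))

theorem lieBracketForm_apply_const (f : E [×k + 1]→L[𝕜] E) (g : E [×l + 1]→L[𝕜] E) (u : E) :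
    lieBracketForm f g (fun _ => u) =
      (k + 1) • f (Fin.cons (g fun _ => u) fun _ => u) -
        (l + 1) • g (Fin.cons (f fun _ => u) fun _ => u) := by
  simp only [lieBracketForm, sub_apply, smul_apply, domDomCongr_apply, compFirst_apply]
  rfl

theorem lieBracketForm_apply_const_of_symmetric (f : E [×k + 1]→L[𝕜] E)
    (g : E [×l + 1]→L[𝕜] E)
    (hf : ∀ (σ : Equiv.Perm (Fin (k + 1))) (m : Fin (k + 1) → E), f (fun i => m (σ i)) = f m)
    (hg : ∀ (σ : Equiv.Perm (Fin (l + 1))) (m : Fin (l + 1) → E), g (fun i => m (σ i)) = g m)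
    (u : E) :
    lieBracketForm f g (fun _ => u) =
      fderiv 𝕜 (fun x => f fun _ => x) u (g fun _ => u) -
        fderiv 𝕜 (fun x => g fun _ => x) u (f fun _ => u) := by
  rw [lieBracketForm_apply_const, f.fderiv_apply_const_apply_of_symmetric hf,
    g.fderiv_apply_const_apply_of_symmetric hg]

theorem norm_lieBracketForm_le (f : E [×k + 1]→L[𝕜] E) (g : E [×l + 1]→L[𝕜] E) :
    ‖lieBracketForm f g‖ ≤ (k + l + 2) * ‖f‖ * ‖g‖ :=
  calc ‖lieBracketForm f g‖ ≤ (k + 1) * ‖f.compFirst g‖ + (l + 1) * ‖g.compFirst f‖ := by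
        refine (norm_sub_le _ _).trans (add_le_add ?_ ?_) <;>
          refine norm_nsmul_le.trans_eq ?_ <;> rw [norm_domDomCongr, Nat.cast_succ]
    _ ≤ (k + 1) * (‖f‖ * ‖g‖) + (l + 1) * (‖g‖ * ‖f‖) := by
        gcongr <;> exact norm_compFirst_le _ _
    _ = (k + l + 2) * ‖f‖ * ‖g‖ := by ring

end LieBracket

end ContinuousMultilinearMap

/-- Let `X, Y` be homogeneous polynomial vector fields on `ℝⁿ` of degrees
`s₁, s₂`, given by symmetric multilinear maps `BX, BY` with multilinear norms bounded by
`CX, CY`. Then the Lie bracket `[X,Y](u) = DX(u)·Y(u) - DY(u)·X(u)` is a polynomial vector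
field of degree at most `s₁ + s₂ - 1` whose multilinear norm is at most `(s₁+s₂) CX CY`,
uniformly in the dimension `n`. -/
theorem stmt_11 (n s₁ s₂ : ℕ) (h₁ : 1 ≤ s₁) (h₂ : 1 ≤ s₂) (CX CY : ℝ)
    (hCX0 : 0 ≤ CX) (hCY0 : 0 ≤ CY)
    (BX : MultilinearMap ℝ (fun _ : Fin s₁ => EuclideanSpace ℝ (Fin n))
      (EuclideanSpace ℝ (Fin n)))
    (BY : MultilinearMap ℝ (fun _ : Fin s₂ => EuclideanSpace ℝ (Fin n))
      (EuclideanSpace ℝ (Fin n)))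
    (hBXsym : ∀ (σ : Equiv.Perm (Fin s₁)) (m : Fin s₁ → EuclideanSpace ℝ (Fin n)),
      BX (fun i => m (σ i)) = BX m)
    (hBYsym : ∀ (σ : Equiv.Perm (Fin s₂)) (m : Fin s₂ → EuclideanSpace ℝ (Fin n)),
      BY (fun i => m (σ i)) = BY m)
    (hCX : ∀ ψ : Fin s₁ → EuclideanSpace ℝ (Fin n), ‖BX ψ‖ ≤ CX * ∏ i, ‖ψ i‖)
    (hCY : ∀ ψ : Fin s₂ → EuclideanSpace ℝ (Fin n), ‖BY ψ‖ ≤ CY * ∏ i, ‖ψ i‖)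
    (X Y : EuclideanSpace ℝ (Fin n) → EuclideanSpace ℝ (Fin n))
    (hX : ∀ u, X u = BX (fun _ => u)) (hY : ∀ u, Y u = BY (fun _ => u)) :
    ∃ BZ : MultilinearMap ℝ (fun _ : Fin (s₁ + s₂ - 1) => EuclideanSpace ℝ (Fin n))
        (EuclideanSpace ℝ (Fin n)),
      (∀ (σ : Equiv.Perm (Fin (s₁ + s₂ - 1))) (m : Fin (s₁ + s₂ - 1) → EuclideanSpace ℝ (Fin n)),
        BZ (fun i => m (σ i)) = BZ m) ∧
      (∀ u : EuclideanSpace ℝ (Fin n),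
        BZ (fun _ => u) = fderiv ℝ X u (Y u) - fderiv ℝ Y u (X u)) ∧
      (∀ ψ : Fin (s₁ + s₂ - 1) → EuclideanSpace ℝ (Fin n),
        ‖BZ ψ‖ ≤ (s₁ + s₂ : ℝ) * CX * CY * ∏ i, ‖ψ i‖) := by
  obtain ⟨k, rfl⟩ : ∃ k, s₁ = k + 1 := ⟨s₁ - 1, by omega⟩
  obtain ⟨l, rfl⟩ : ∃ l, s₂ = l + 1 := ⟨s₂ - 1, by omega⟩
  let f := BX.mkContinuous CX hCX
  let g := BY.mkContinuous CY hCY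
  obtain rfl : X = fun u => f fun _ => u := funext hX
  obtain rfl : Y = fun u => g fun _ => u := funext hY
  let W := (f.lieBracketForm g).domDomCongr
    (finCongr (by omega) : Fin (k + l + 1) ≃ Fin (k + 1 + (l + 1) - 1))
  have hW : ‖W‖ ≤ (k + 1 + (l + 1) : ℝ) * CX * CY :=
    calc ‖W‖ = ‖f.lieBracketForm g‖ := by rw [ContinuousMultilinearMap.norm_domDomCongr]
      _ ≤ (k + l + 2) * ‖f‖ * ‖g‖ := ContinuousMultilinearMap.norm_lieBracketForm_le f g
      _ ≤ (k + l + 2) * CX * CY := by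
          gcongr
          exacts [BX.mkContinuous_norm_le hCX0 hCX, BY.mkContinuous_norm_le hCY0 hCY]
      _ = (k + 1 + (l + 1) : ℝ) * CX * CY := by ring
  refine ⟨W.symmetrize.toMultilinearMap, W.symmetrize_apply_perm, fun u => ?_, fun ψ => ?_⟩
  · exact (W.symmetrize_apply_const u).trans
      (f.lieBracketForm_apply_const_of_symmetric g hBXsym hBYsym u)
  · push_cast
    exact W.symmetrize.le_of_opNorm_le (W.norm_symmetrize_le.trans hW) ψ
end

section
/- The implicit midpoint rule u^{n+1} = u^n + (ih/2)A(u^{n+1} + u^n) + ih·f((u^{n+1}+u^n)/2), with f(u)_ℓ = λ|u_ℓ|^{2r}u_ℓ, preserves the discrete L² norm: N(u^{n+1}) = N(u^n), where N(u) = δx Σ_ℓ |u_ℓ|². -/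
/-- The nonlinearity `f(u)_ℓ = λ |u_ℓ|^{2r} u_ℓ`. -/
noncomputable def fNL (n r : ℕ) (lam : ℝ) (w : Fin n → ℂ) : Fin n → ℂ :=
  fun ℓ => (lam : ℂ) * (‖w ℓ‖ : ℂ) ^ (2 * r) * w ℓ

/-!
With `m = (u + v)/2` the scheme reads `v - u = i h (A m + f m)`. Both `mᴴ A m` (as `A` is
Hermitian) and `mᴴ f m = λ Σ |m_ℓ|^{2r+2}` are real, so `mᴴ (v - u)` is purely imaginary,
while `Σ |v_ℓ|² - Σ |u_ℓ|² = 2 Re mᴴ (v - u)`.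
-/

open Complex Matrix

theorem Matrix.IsSymm.isHermitian_map_ofReal {ι : Type*} {A : Matrix ι ι ℝ} (hA : A.IsSymm) :
    (A.map ((↑) : ℝ → ℂ)).IsHermitian :=
  (isHermitian_iff_isSymm.mpr hA).map _ fun _ => (conj_ofReal _).symm

theorem im_star_dotProduct_fNL (n r : ℕ) (lam : ℝ) (w : Fin n → ℂ) :
    (star w ⬝ᵥ fNL n r lam w).im = 0 := by
  simp only [dotProduct, im_sum, fNL]
  refine Finset.sum_eq_zero fun ℓ _ => ?_
  have hconj : star (w ℓ) * w ℓ = ((‖w ℓ‖ ^ 2 : ℝ) : ℂ) := by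
    rw [star_def, conj_mul']
    push_cast
    rfl
  rw [Pi.star_apply, mul_left_comm, hconj]
  norm_cast

theorem sum_norm_sq_sub_sum_norm_sq {ι : Type*} [Fintype ι] (u v : ι → ℂ) :
    ∑ i, ‖v i‖ ^ 2 - ∑ i, ‖u i‖ ^ 2 = (star (v + u) ⬝ᵥ (v - u)).re := by
  simp only [dotProduct, re_sum, ← Finset.sum_sub_distrib]
  refine Finset.sum_congr rfl fun i _ => ?_
  simp only [Pi.star_apply, Pi.add_apply, Pi.sub_apply, mul_re, star_def, conj_re, conj_im,
    add_re, add_im, sub_re, sub_im, Complex.sq_norm, normSq_apply]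
  ring

theorem sum_norm_sq_eq_of_sub_eq_I_mul_smul {ι : Type*} [Fintype ι] {u v x : ι → ℂ} (t : ℝ)
    (hvu : v - u = (I * t) • x) (hx : (star ((1 / 2 : ℂ) • (v + u)) ⬝ᵥ x).im = 0) :
    ∑ i, ‖v i‖ ^ 2 = ∑ i, ‖u i‖ ^ 2 := by
  have hx' : (star (v + u) ⬝ᵥ x).im = 0 := by
    rw [star_smul, smul_dotProduct, smul_eq_mul, mul_im] at hx
    simpa using hx
  have h := sum_norm_sq_sub_sum_norm_sq u v
  rw [hvu, dotProduct_smul, smul_eq_mul, mul_re, hx', I_mul_re, ofReal_im, neg_zero, zero_mul,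
    mul_zero, sub_zero] at h
  exact sub_eq_zero.mp h

theorem stmt_17_general (n : ℕ) (δx h : ℝ)
    (r : ℕ) (lam : ℝ)
    (A : Matrix (Fin n) (Fin n) ℝ) (hA : A.IsSymm)
    (u v : Fin n → ℂ)
    (hmid : v = u + (Complex.I * (h : ℂ) / 2) • (A.map Complex.ofReal).mulVec (v + u)
      + (Complex.I * (h : ℂ)) • fNL n r lam ((1 / 2 : ℂ) • (v + u))) :
    δx * ∑ ℓ, ‖v ℓ‖ ^ 2 = δx * ∑ ℓ, ‖u ℓ‖ ^ 2 := by
  set m := (1 / 2 : ℂ) • (v + u)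
  set A' := A.map ofReal
  have hvu : v - u = (I * h) • (A' *ᵥ m + fNL n r lam m) := by
    rw [sub_eq_iff_eq_add', hmid, mulVec_smul, smul_add, smul_smul]
    ring_nf
  have hx : (star m ⬝ᵥ (A' *ᵥ m + fNL n r lam m)).im = 0 := by
    rw [dotProduct_add, add_im, im_star_dotProduct_fNL, add_zero]
    exact hA.isHermitian_map_ofReal.im_star_dotProduct_mulVec_self m
  rw [sum_norm_sq_eq_of_sub_eq_I_mul_smul h hvu hx]

/-- the implicit midpoint rule
`u⁺ = u + (ih/2)A(u⁺ + u) + ih f((u⁺ + u)/2)` preserves the discrete L² norm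
`N(u) = δx Σ_ℓ |u_ℓ|²`. -/
theorem stmt_17 (n : ℕ) (δx h : ℝ) (hδ : 0 < δx) (hh : 0 < h)
    (r : ℕ) (hr : 1 ≤ r) (lam : ℝ) (hlam : lam = 1 ∨ lam = -1)
    (A : Matrix (Fin n) (Fin n) ℝ) (hA : A.IsSymm)
    (u v : Fin n → ℂ)
    (hmid : v = u + (Complex.I * (h : ℂ) / 2) • (A.map Complex.ofReal).mulVec (v + u)
      + (Complex.I * (h : ℂ)) • fNL n r lam ((1 / 2 : ℂ) • (v + u))) :
    δx * ∑ ℓ, ‖v ℓ‖ ^ 2 = δx * ∑ ℓ, ‖u ℓ‖ ^ 2 :=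
  stmt_17_general n δx h r lam A hA u v hmid
end
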